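/- arXiv:1312.7594 — 3 statements merged into one kernel-verified Lean document; each statement's English description precedes it below -/
import Mathlib

section
/- Let d ≥ 1, 0 < β < α < 2 and λ > 0. For a ∈ [0,1] define f_{a,λ}(s,z,y) := s^{−(d+β)/α} if |z−y| ≤ s^{1/α}, and f_{a,λ}(s,z,y) := |z−y|^{−(d+β)} 1_{|z−y|≤λ} + (|z−y|^{−(d+α)} + a|z−y|^{−(d+β)}) 1_{|z−y|>λ} if |z−y| > s^{1/α}. Then there exists C = C(d,α,β,λ) > 0 such that for all a ∈ [0,1], t > 0 and y ∈ ℝ^d, ∫₀^t ∫_{ℝ^d} f_{a,λ}(s,z,y) dz ds ≤ C (t^{1−β/α} + t). -/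
/-!
The kernel is dominated by `(1 + λ ^ (β - α)) * max (s ^ (1 / α)) ‖z - y‖ ^ (-(d + β))`.
By scaling, the space integral of `max r ‖x‖ ^ (-p)` is `r ^ (d - p)` times its value at `r = 1`,
which is finite since `p = d + β > d`. The space integral is therefore `O(s ^ (-β / α))`,
and this is integrable on `(0, t]` because `β < α`.
-/

open Real MeasureTheory

/-- `spaceTimeKernel d α β λ a s ‖z - y‖` is the paper's `f_{a,λ}(s, z, y)` in dimension `d`. -/
noncomputable def spaceTimeKernel (d α β lam a s ρ : ℝ) : ℝ :=
  if ρ ≤ s ^ (1 / α) then s ^ (-(d + β) / α)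
  else if ρ ≤ lam then ρ ^ (-(d + β))
  else ρ ^ (-(d + α)) + a * ρ ^ (-(d + β))

section SpaceTimeKernel

variable {d α β lam a s : ℝ}

lemma spaceTimeKernel_nonneg (ha : 0 ≤ a) (hs : 0 ≤ s) (ρ : ℝ) :
    0 ≤ spaceTimeKernel d α β lam a s ρ := by
  unfold spaceTimeKernel
  split_ifs with h₁
  · positivity
  · have hρ : 0 ≤ ρ := (rpow_nonneg hs _).trans (not_le.mp h₁).le
    positivity
  · have hρ : 0 ≤ ρ := (rpow_nonneg hs _).trans (not_le.mp h₁).le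
    positivity

lemma spaceTimeKernel_le (hβα : β ≤ α) (hlam : 0 < lam) (ha : a ≤ 1) (hs : 0 < s) (ρ : ℝ) :
    spaceTimeKernel d α β lam a s ρ ≤ (1 + lam ^ (β - α)) * max (s ^ (1 / α)) ρ ^ (-(d + β)) := by
  have hK : 1 ≤ 1 + lam ^ (β - α) := le_add_of_nonneg_right (rpow_nonneg hlam.le _)
  unfold spaceTimeKernel
  split_ifs with h₁ h₂
  · rw [max_eq_left h₁, ← rpow_mul hs.le, one_div_mul_eq_div]
    exact le_mul_of_one_le_left (by positivity) hK
  · rw [max_eq_right (not_le.mp h₁).le]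
    have hρ : 0 < ρ := (rpow_pos_of_pos hs _).trans (not_le.mp h₁)
    exact le_mul_of_one_le_left (by positivity) hK
  · rw [max_eq_right (not_le.mp h₁).le]
    have hρ : 0 < ρ := (rpow_pos_of_pos hs _).trans (not_le.mp h₁)
    have hsplit : ρ ^ (-(d + α)) = ρ ^ (β - α) * ρ ^ (-(d + β)) := by
      rw [← rpow_add hρ]; ring_nf
    have hfar : ρ ^ (β - α) ≤ lam ^ (β - α) :=
      rpow_le_rpow_of_nonpos hlam (not_le.mp h₂).le (sub_nonpos.mpr hβα)
    have hpow : 0 ≤ ρ ^ (-(d + β)) := by positivity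
    rw [hsplit]
    linarith [mul_le_mul_of_nonneg_right hfar hpow, mul_le_mul_of_nonneg_right ha hpow]

end SpaceTimeKernel

section HaarPower

variable {E : Type*} [NormedAddCommGroup E] [NormedSpace ℝ E]

lemma max_rpow_neg_eq_mul {r : ℝ} (hr : 0 < r) (p : ℝ) (x : E) :
    max r ‖x‖ ^ (-p) = r ^ (-p) * max 1 ‖r⁻¹ • x‖ ^ (-p) := by
  have hmax : max r ‖x‖ = r * max 1 ‖r⁻¹ • x‖ := by
    rw [norm_smul, norm_inv, Real.norm_of_nonneg hr.le, mul_max_of_nonneg _ _ hr.le, mul_one,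
      mul_inv_cancel_left₀ hr.ne']
  rw [hmax, mul_rpow hr.le (by positivity)]

variable [FiniteDimensional ℝ E] [MeasurableSpace E] [BorelSpace E] (μ : Measure E)
  [μ.IsAddHaarMeasure]

lemma integrable_max_one_rpow_neg {p : ℝ} (hp : (Module.finrank ℝ E : ℝ) < p) :
    Integrable (fun x : E => max 1 ‖x‖ ^ (-p)) μ := by
  have hp0 : 0 ≤ p := (Nat.cast_nonneg _).trans hp.le
  refine ((integrable_one_add_norm hp).const_mul (2 ^ p)).mono'
    (Measurable.aestronglyMeasurable (by fun_prop)) (Filter.Eventually.of_forall fun x => ?_)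
  have hle : (1 + ‖x‖) / 2 ≤ max 1 ‖x‖ := by
    linarith [le_max_left 1 ‖x‖, le_max_right 1 ‖x‖]
  rw [Real.norm_of_nonneg (by positivity)]
  calc max 1 ‖x‖ ^ (-p) ≤ ((1 + ‖x‖) / 2) ^ (-p) :=
        rpow_le_rpow_of_nonpos (by positivity) hle (neg_nonpos.mpr hp0)
    _ = 2 ^ p * (1 + ‖x‖) ^ (-p) := by
        rw [div_rpow (by positivity) zero_le_two, rpow_neg zero_le_two, div_inv_eq_mul, mul_comm]

lemma integrable_max_rpow_neg {p r : ℝ} (hp : (Module.finrank ℝ E : ℝ) < p) (hr : 0 < r) :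
    Integrable (fun x : E => max r ‖x‖ ^ (-p)) μ := by
  simp_rw [max_rpow_neg_eq_mul hr]
  exact (((integrable_max_one_rpow_neg μ hp).comp_smul (inv_ne_zero hr.ne'))).const_mul _

lemma integral_max_rpow_neg {r : ℝ} (hr : 0 < r) (p : ℝ) :
    ∫ x, max r ‖x‖ ^ (-p) ∂μ
      = r ^ ((Module.finrank ℝ E : ℝ) - p) * ∫ x, max 1 ‖x‖ ^ (-p) ∂μ := by
  simp_rw [max_rpow_neg_eq_mul hr, integral_const_mul,
    Measure.integral_comp_inv_smul_of_nonneg μ (fun x => max 1 ‖x‖ ^ (-p)) hr.le, smul_eq_mul,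
    ← mul_assoc, ← rpow_natCast, ← rpow_add hr, neg_add_eq_sub]

variable {α β lam a s : ℝ}

lemma integral_spaceTimeKernel_le (hβ : 0 < β) (hβα : β ≤ α) (hlam : 0 < lam)
    (ha : a ∈ Set.Icc 0 1) (hs : 0 < s) (y : E) :
    ∫ z, spaceTimeKernel (Module.finrank ℝ E) α β lam a s (dist z y) ∂μ
      ≤ (1 + lam ^ (β - α)) * (∫ x, max 1 ‖x‖ ^ (-(Module.finrank ℝ E + β)) ∂μ)
        * s ^ (-(β / α)) := by
  set n : ℝ := (Module.finrank ℝ E : ℝ)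
  have hr : 0 < s ^ (1 / α) := rpow_pos_of_pos hs _
  have hdom : Integrable
      (fun z => (1 + lam ^ (β - α)) * max (s ^ (1 / α)) ‖z - y‖ ^ (-(n + β))) μ :=
    ((integrable_max_rpow_neg μ (lt_add_of_pos_right n hβ) hr).comp_sub_right y).const_mul _
  calc ∫ z, spaceTimeKernel n α β lam a s (dist z y) ∂μ
      ≤ ∫ z, (1 + lam ^ (β - α)) * max (s ^ (1 / α)) ‖z - y‖ ^ (-(n + β)) ∂μ :=
        integral_mono_of_nonneg
          (Filter.Eventually.of_forall fun z => spaceTimeKernel_nonneg ha.1 hs.le _) hdom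
          (Filter.Eventually.of_forall fun z => by
            simpa only [dist_eq_norm] using spaceTimeKernel_le hβα hlam ha.2 hs (dist z y))
    _ = (1 + lam ^ (β - α)) * (∫ x, max 1 ‖x‖ ^ (-(n + β)) ∂μ) * s ^ (-(β / α)) := by
        rw [integral_const_mul,
          integral_sub_right_eq_self (fun x => max (s ^ (1 / α)) ‖x‖ ^ (-(n + β))),
          integral_max_rpow_neg μ hr, ← rpow_mul hs.le,
          show 1 / α * (n - (n + β)) = -(β / α) by ring]
        ring

lemma setIntegral_Ioc_integral_spaceTimeKernel_le (hβ : 0 < β) (hβα : β < α) (hlam : 0 < lam)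
    (ha : a ∈ Set.Icc 0 1) {t : ℝ} (ht : 0 ≤ t) (y : E) :
    ∫ s in Set.Ioc 0 t, ∫ z, spaceTimeKernel (Module.finrank ℝ E) α β lam a s (dist z y) ∂μ
      ≤ (1 + lam ^ (β - α)) * (∫ x, max 1 ‖x‖ ^ (-(Module.finrank ℝ E + β)) ∂μ)
        / (1 - β / α) * t ^ (1 - β / α) := by
  have hγ : β / α < 1 := (div_lt_one (hβ.trans hβα)).mpr hβα
  have hpow : IntegrableOn (fun s : ℝ => s ^ (-(β / α))) (Set.Ioc 0 t) := by
    rw [← intervalIntegrable_iff_integrableOn_Ioc_of_le ht]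
    exact intervalIntegral.intervalIntegrable_rpow' (by linarith)
  calc ∫ s in Set.Ioc 0 t, ∫ z, spaceTimeKernel (Module.finrank ℝ E) α β lam a s (dist z y) ∂μ
      ≤ ∫ s in Set.Ioc 0 t, (1 + lam ^ (β - α))
          * (∫ x, max 1 ‖x‖ ^ (-(Module.finrank ℝ E + β)) ∂μ) * s ^ (-(β / α)) := by
        refine integral_mono_of_nonneg ?_ (hpow.const_mul _) ?_ <;>
          filter_upwards [ae_restrict_mem measurableSet_Ioc] with s hs
        · exact integral_nonneg fun z => spaceTimeKernel_nonneg ha.1 hs.1.le _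
        · exact integral_spaceTimeKernel_le μ hβ hβα.le hlam ha hs.1 y
    _ = _ := by
        rw [integral_const_mul, ← intervalIntegral.integral_of_le ht,
          integral_rpow (Or.inl (by linarith)), zero_rpow (by linarith), sub_zero,
          neg_add_eq_sub]
        ring

end HaarPower

theorem f_a_lambda_space_time_integral_bound_general (d : ℕ) (α β lam : ℝ)
    (hβ : 0 < β) (hβα : β < α) (hlam : 0 < lam) :
    ∃ C > (0:ℝ), ∀ a ∈ Set.Icc (0:ℝ) 1, ∀ t > (0:ℝ), ∀ y : EuclideanSpace ℝ (Fin d),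
      (∫ s in Set.Ioc (0:ℝ) t, ∫ z : EuclideanSpace ℝ (Fin d),
          (if dist z y ≤ s ^ (1/α) then s ^ (-((d : ℝ) + β)/α)
           else if dist z y ≤ lam then (dist z y) ^ (-((d : ℝ) + β))
           else (dist z y) ^ (-((d : ℝ) + α)) + a * (dist z y) ^ (-((d : ℝ) + β))))
        ≤ C * (t ^ (1 - β/α) + t) := by
  have hγ : 0 < 1 - β / α := sub_pos.mpr ((div_lt_one (hβ.trans hβα)).mpr hβα)
  have hM : 0 ≤ ∫ x : EuclideanSpace ℝ (Fin d), max 1 ‖x‖ ^ (-(d + β)) :=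
    integral_nonneg fun x => by positivity
  set A := (1 + lam ^ (β - α)) * (∫ x : EuclideanSpace ℝ (Fin d), max 1 ‖x‖ ^ (-(d + β)))
    / (1 - β / α)
  have hA : 0 ≤ A := div_nonneg (mul_nonneg (by positivity) hM) hγ.le
  refine ⟨A + 1, by linarith, fun a ha t ht y => ?_⟩
  have hbound := setIntegral_Ioc_integral_spaceTimeKernel_le volume hβ hβα hlam ha ht.le y
  rw [finrank_euclideanSpace_fin] at hbound
  calc _ ≤ A * t ^ (1 - β / α) := hbound
    _ ≤ (A + 1) * (t ^ (1 - β / α) + t) := by gcongr <;> linarith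

/-- Lemma 2.4 of the paper: there is `C = C(d,α,β,λ) > 0` such that for all
`a ∈ [0,1]`, `t > 0` and `y ∈ ℝ^d`,
`∫₀^t ∫_{ℝ^d} f_{a,λ}(s,z,y) dz ds ≤ C (t^(1-β/α) + t)`. -/
theorem f_a_lambda_space_time_integral_bound (d : ℕ) (hd : 1 ≤ d) (α β lam : ℝ)
    (hβ : 0 < β) (hβα : β < α) (hα : α < 2) (hlam : 0 < lam) :
    ∃ C > (0:ℝ), ∀ a ∈ Set.Icc (0:ℝ) 1, ∀ t > (0:ℝ), ∀ y : EuclideanSpace ℝ (Fin d),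
      (∫ s in Set.Ioc (0:ℝ) t, ∫ z : EuclideanSpace ℝ (Fin d),
          (if dist z y ≤ s ^ (1/α) then s ^ (-((d : ℝ) + β)/α)
           else if dist z y ≤ lam then (dist z y) ^ (-((d : ℝ) + β))
           else (dist z y) ^ (-((d : ℝ) + α)) + a * (dist z y) ^ (-((d : ℝ) + β))))
        ≤ C * (t ^ (1 - β/α) + t) :=
  f_a_lambda_space_time_integral_bound_general d α β lam hβ hβα hlam
end

section
/- Let d ≥ 1, 0 < α < 2, and let g_a(t,x,y) := t^{−d/α} if |x−y| ≤ t^{1/α} and g_a(t,x,y) := t/|x−y|^{d+α} + a·t/|x−y|^{d+β} if |x−y| > t^{1/α}, where 0 < β < α and a ≥ 0. Then there exists a constant c = c(d,α,β) ≥ 1 such that for all t > 0, a ≥ 0 and x ∈ ℝ^d: c^{−1}(1 + a t^{1−β/α}) ≤ ∫_{ℝ^d} g_a(t,x,y) dy ≤ c(1 + a t^{1−β/α}). -/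
/-!
The integrand depends on `y` only through `s = |x - y|`, so in polar coordinates the integral is
`d ω_d ∫₀^∞ s^(d-1) g(s) ds`, with `ω_d` the volume of the unit ball. With `ρ = t^(1/α)` the
ball `s ≤ ρ` contributes `ρ^d t^(-d/α) / d = 1/d` and the tail contributes
`t ρ^(-α) / α + a t ρ^(-β) / β = 1/α + a t^(1-β/α) / β`. So the integral is exactly
`K₁ + K₂ a t^(1-β/α)` with `K₁, K₂ > 0` depending only on `d, α, β`.
-/

open Real MeasureTheory Set

/-- `g_a(t, x, y) = gRadial d α β t a (dist x y)`. -/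
noncomputable def gRadial (d : ℕ) (α β t a s : ℝ) : ℝ :=
  if s ≤ t ^ (1 / α) then t ^ (-(d : ℝ) / α)
  else t / s ^ ((d : ℝ) + α) + a * t / s ^ ((d : ℝ) + β)

lemma integral_fun_dist_addHaar {E F : Type*} [NormedAddCommGroup E] [NormedSpace ℝ E]
    [FiniteDimensional ℝ E] [Nontrivial E] [MeasurableSpace E] [BorelSpace E]
    [NormedAddCommGroup F] [NormedSpace ℝ F] (μ : Measure E) [μ.IsAddHaarMeasure]
    (f : ℝ → F) (x : E) :
    ∫ y, f (dist x y) ∂μ =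
      Module.finrank ℝ E • μ.real (Metric.ball 0 1) •
        ∫ s in Ioi (0 : ℝ), s ^ (Module.finrank ℝ E - 1) • f s := by
  simp_rw [dist_comm x, dist_eq_norm]
  rw [integral_sub_right_eq_self (fun y => f ‖y‖) x]
  exact integral_fun_norm_addHaar μ f

lemma integral_Ioc_zero_pow (n : ℕ) {r : ℝ} (hr : 0 ≤ r) :
    ∫ s in Ioc 0 r, s ^ n = r ^ (n + 1) / (n + 1) := by
  rw [← intervalIntegral.integral_of_le hr, integral_pow]
  simp

lemma integral_Ioi_rpow_neg_one_sub {γ r : ℝ} (hγ : 0 < γ) (hr : 0 < r) :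
    ∫ s in Ioi r, s ^ (-1 - γ) = r ^ (-γ) / γ := by
  rw [integral_Ioi_rpow_of_lt (by linarith) hr, show -1 - γ + 1 = -γ by ring, neg_div, div_neg, neg_neg]

lemma pow_pred_mul_div_rpow_add {d : ℕ} (hd : 1 ≤ d) {s : ℝ} (hs : 0 < s) (c γ : ℝ) :
    s ^ (d - 1) * (c / s ^ ((d : ℝ) + γ)) = c * s ^ (-1 - γ) := by
  rw [← rpow_natCast, Nat.cast_sub hd, Nat.cast_one, div_eq_mul_inv, ← rpow_neg hs.le,
    mul_left_comm, ← rpow_add hs]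
  ring_nf

section gRadial

variable {d : ℕ} {α β t : ℝ} (a : ℝ)

lemma pow_pred_smul_gRadial_of_le {s : ℝ} (hs : s ≤ t ^ (1 / α)) :
    s ^ (d - 1) • gRadial d α β t a s = s ^ (d - 1) * t ^ (-(d : ℝ) / α) := by
  rw [gRadial, if_pos hs, smul_eq_mul]

lemma pow_pred_smul_gRadial_of_lt (hd : 1 ≤ d) (ht : 0 < t) {s : ℝ} (hs : t ^ (1 / α) < s) :
    s ^ (d - 1) • gRadial d α β t a s = t * s ^ (-1 - α) + a * t * s ^ (-1 - β) := by
  have hs0 : 0 < s := (rpow_pos_of_pos ht _).trans hs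
  rw [gRadial, if_neg (not_le.2 hs), smul_eq_mul, mul_add, pow_pred_mul_div_rpow_add hd hs0,
    pow_pred_mul_div_rpow_add hd hs0]

lemma integrableOn_Ioc_pow_pred_smul_gRadial :
    IntegrableOn (fun s => s ^ (d - 1) • gRadial d α β t a s) (Ioc 0 (t ^ (1 / α))) :=
  (((continuous_pow _).mul continuous_const).integrableOn_Ioc).congr_fun
    (fun _ hs => (pow_pred_smul_gRadial_of_le a hs.2).symm) measurableSet_Ioc

lemma integrableOn_Ioi_rpow_neg_one_sub {γ r : ℝ} (hγ : 0 < γ) (hr : 0 < r) :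
    IntegrableOn (fun s : ℝ => s ^ (-1 - γ)) (Ioi r) :=
  integrableOn_Ioi_rpow_of_lt (by linarith) hr

lemma integrableOn_Ioi_pow_pred_smul_gRadial (hd : 1 ≤ d) (hα : 0 < α) (hβ : 0 < β)
    (ht : 0 < t) :
    IntegrableOn (fun s => s ^ (d - 1) • gRadial d α β t a s) (Ioi (t ^ (1 / α))) := by
  have hr : 0 < t ^ (1 / α) := rpow_pos_of_pos ht _
  exact (IntegrableOn.add ((integrableOn_Ioi_rpow_neg_one_sub hα hr).const_mul t)
    ((integrableOn_Ioi_rpow_neg_one_sub hβ hr).const_mul (a * t))).congr_fun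
    (fun s hs => (pow_pred_smul_gRadial_of_lt a hd ht hs).symm) measurableSet_Ioi

lemma integral_Ioc_pow_pred_smul_gRadial (hd : 1 ≤ d) (ht : 0 < t) :
    ∫ s in Ioc 0 (t ^ (1 / α)), s ^ (d - 1) • gRadial d α β t a s = 1 / d := by
  rw [setIntegral_congr_fun measurableSet_Ioc fun s hs => pow_pred_smul_gRadial_of_le a hs.2,
    integral_mul_const, integral_Ioc_zero_pow _ (rpow_pos_of_pos ht _).le, Nat.sub_add_cancel hd,
    Nat.cast_sub hd, Nat.cast_one, sub_add_cancel, div_mul_eq_mul_div, ← rpow_natCast,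
    ← rpow_mul ht.le, ← rpow_add ht]
  ring_nf
  simp

lemma integral_Ioi_pow_pred_smul_gRadial (hd : 1 ≤ d) (hα : 0 < α) (hβ : 0 < β) (ht : 0 < t) :
    ∫ s in Ioi (t ^ (1 / α)), s ^ (d - 1) • gRadial d α β t a s =
      1 / α + a * t ^ (1 - β / α) / β := by
  have hr : 0 < t ^ (1 / α) := rpow_pos_of_pos ht _
  have hpow : ∀ γ : ℝ, (t ^ (1 / α)) ^ (-γ) = t ^ (-(γ / α)) := fun γ => by
    rw [← rpow_mul ht.le]; ring_nf
  rw [setIntegral_congr_fun measurableSet_Ioi fun s hs => pow_pred_smul_gRadial_of_lt a hd ht hs,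
    integral_add ((integrableOn_Ioi_rpow_neg_one_sub hα hr).const_mul t)
      ((integrableOn_Ioi_rpow_neg_one_sub hβ hr).const_mul (a * t)),
    integral_const_mul, integral_const_mul, integral_Ioi_rpow_neg_one_sub hα hr,
    integral_Ioi_rpow_neg_one_sub hβ hr, hpow, hpow, div_self hα.ne', rpow_neg_one,
    sub_eq_add_neg 1, rpow_add ht, rpow_one]
  field_simp

lemma integral_Ioi_zero_pow_pred_smul_gRadial (hd : 1 ≤ d) (hα : 0 < α) (hβ : 0 < β)
    (ht : 0 < t) :
    ∫ s in Ioi 0, s ^ (d - 1) • gRadial d α β t a s =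
      1 / d + 1 / α + a * t ^ (1 - β / α) / β := by
  have hr : 0 < t ^ (1 / α) := rpow_pos_of_pos ht _
  rw [← Ioc_union_Ioi_eq_Ioi hr.le, setIntegral_union (Ioc_disjoint_Ioi le_rfl) measurableSet_Ioi
    (integrableOn_Ioc_pow_pred_smul_gRadial a) (integrableOn_Ioi_pow_pred_smul_gRadial a hd hα hβ ht),
    integral_Ioc_pow_pred_smul_gRadial a hd ht, integral_Ioi_pow_pred_smul_gRadial a hd hα hβ ht]
  ring

end gRadial

lemma exists_inv_mul_le_and_le_mul_of_pos {K₁ K₂ : ℝ} (h₁ : 0 < K₁) (h₂ : 0 < K₂) :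
    ∃ c ≥ (1 : ℝ), ∀ s ≥ (0 : ℝ), c⁻¹ * (1 + s) ≤ K₁ + K₂ * s ∧ K₁ + K₂ * s ≤ c * (1 + s) := by
  have h₁' := inv_pos.2 h₁
  have h₂' := inv_pos.2 h₂
  set c := 1 + K₁ + K₂ + K₁⁻¹ + K₂⁻¹
  have hc₁ : c⁻¹ ≤ K₁ := inv_le_of_inv_le₀ h₁ (by linarith)
  have hc₂ : c⁻¹ ≤ K₂ := inv_le_of_inv_le₀ h₂ (by linarith)
  refine ⟨c, by linarith, fun s hs => ⟨?_, ?_⟩⟩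
  · nlinarith [mul_le_mul_of_nonneg_right hc₂ hs]
  · nlinarith [mul_le_mul_of_nonneg_right (show K₂ ≤ c by linarith) hs]

theorem g_a_integral_comparable_general (d : ℕ) (hd : 1 ≤ d) (α β : ℝ)
    (hβ : 0 < β) (hβα : β < α) :
    ∃ c ≥ (1:ℝ), ∀ t > (0:ℝ), ∀ a ≥ (0:ℝ), ∀ x : EuclideanSpace ℝ (Fin d),
      c⁻¹ * (1 + a * t ^ (1 - β/α)) ≤
        (∫ y : EuclideanSpace ℝ (Fin d),
          (if dist x y ≤ t ^ (1/α) then t ^ (-(d : ℝ)/α)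
           else t / (dist x y) ^ ((d : ℝ) + α) + a * t / (dist x y) ^ ((d : ℝ) + β))) ∧
      (∫ y : EuclideanSpace ℝ (Fin d),
          (if dist x y ≤ t ^ (1/α) then t ^ (-(d : ℝ)/α)
           else t / (dist x y) ^ ((d : ℝ) + α) + a * t / (dist x y) ^ ((d : ℝ) + β)))
        ≤ c * (1 + a * t ^ (1 - β/α)) := by
  have hα : 0 < α := hβ.trans hβα
  have : Nontrivial (EuclideanSpace ℝ (Fin d)) :=
    Module.nontrivial_of_finrank_pos (R := ℝ) (by rw [finrank_euclideanSpace_fin]; omega)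
  set ω := volume.real (Metric.ball (0 : EuclideanSpace ℝ (Fin d)) 1)
  have hω : 0 < ω :=
    ENNReal.toReal_pos (Metric.measure_ball_pos volume 0 one_pos).ne' measure_ball_lt_top.ne
  have integral_eq : ∀ t > (0 : ℝ), ∀ a, ∀ x : EuclideanSpace ℝ (Fin d),
      ∫ y, gRadial d α β t a (dist x y) =
        d * ω * (1 / d + 1 / α) + d * ω / β * (a * t ^ (1 - β / α)) := by
    intro t ht a x
    rw [integral_fun_dist_addHaar, finrank_euclideanSpace_fin,
      integral_Ioi_zero_pow_pred_smul_gRadial a hd hα hβ ht, nsmul_eq_mul, smul_eq_mul]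
    ring
  obtain ⟨c, hc, hcomp⟩ := exists_inv_mul_le_and_le_mul_of_pos
    (by positivity : 0 < d * ω * (1 / d + 1 / α)) (by positivity : 0 < d * ω / β)
  refine ⟨c, hc, fun t ht a ha x => ?_⟩
  have bounds := hcomp (a * t ^ (1 - β / α)) (by positivity)
  rw [← integral_eq t ht a x] at bounds
  exact bounds

/-- There is a constant `c = c(d,α,β) ≥ 1` such that for all `t > 0`, `a ≥ 0` and
`x ∈ ℝ^d`, `∫_{ℝ^d} g_a(t,x,y) dy` is comparable to `1 + a t^(1-β/α)` with constant `c`. -/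
theorem g_a_integral_comparable (d : ℕ) (hd : 1 ≤ d) (α β : ℝ)
    (hβ : 0 < β) (hβα : β < α) (hα : α < 2) :
    ∃ c ≥ (1:ℝ), ∀ t > (0:ℝ), ∀ a ≥ (0:ℝ), ∀ x : EuclideanSpace ℝ (Fin d),
      c⁻¹ * (1 + a * t ^ (1 - β/α)) ≤
        (∫ y : EuclideanSpace ℝ (Fin d),
          (if dist x y ≤ t ^ (1/α) then t ^ (-(d : ℝ)/α)
           else t / (dist x y) ^ ((d : ℝ) + α) + a * t / (dist x y) ^ ((d : ℝ) + β))) ∧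
      (∫ y : EuclideanSpace ℝ (Fin d),
          (if dist x y ≤ t ^ (1/α) then t ^ (-(d : ℝ)/α)
           else t / (dist x y) ^ ((d : ℝ) + α) + a * t / (dist x y) ^ ((d : ℝ) + β)))
        ≤ c * (1 + a * t ^ (1 - β/α)) :=
  g_a_integral_comparable_general d hd α β hβ hβα
end

section
/- Let d ≥ 1, 0 < β < α < 2 and f₀(t,x,y) := (max(t^{1/α}, |x−y|))^{−(d+β)}. There is a constant c = c(d,α,β) > 0 such that for every t ∈ (0,1] and x, y ∈ ℝ^d, ∫₀^t ∫_{ℝ^d} f₀(t−s, x, z) f₀(s, z, y) dz ds ≤ c f₀(t, x, y). -/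
/-!
Put `p = d + β`, `m₁ = max((t-s)^{1/α}, |x-z|)`, `m₂ = max(s^{1/α}, |z-y|)` and
`M = max(t^{1/α}, |x-y|)`. Since `t ≤ 2 max(t-s, s)` and `|x-y| ≤ |x-z| + |z-y|`, we have
`M ≤ C max(m₁, m₂)` with `C = 2^{1/α} + 2`, so the smaller of `m₁^{-p}`, `m₂^{-p}` is at most
`C^p M^{-p}` and `m₁^{-p} m₂^{-p} ≤ C^p M^{-p} (m₁^{-p} + m₂^{-p})`. By scaling,
`∫ max(a, |z-y|)^{-p} dz = a^{d-p} ∫ max(1, |w|)^{-p} dw`, finite because `p > d`; for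
`a = (t-s)^{1/α}` and `a = s^{1/α}` the factor `a^{d-p}` is `(t-s)^{-β/α}` resp. `s^{-β/α}`.
As `β < α` these are integrable on `(0, t)`, with total `2 t^{1-β/α} / (1-β/α) ≤ 2 / (1-β/α)`
for `t ≤ 1`.
-/

open Real MeasureTheory Filter Set Module

lemma max_rpow_eq_rpow_mul_max_one {a : ℝ} (ha : 0 < a) (r q : ℝ) :
    max a r ^ q = a ^ q * max 1 (a⁻¹ * r) ^ q := by
  rw [← mul_rpow ha.le (le_max_of_le_left zero_le_one), mul_max_of_nonneg _ _ ha.le, mul_one,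
    mul_inv_cancel_left₀ ha.ne']

lemma rpow_neg_mul_rpow_neg_le {u v p : ℝ} (hu : 0 < u) (hv : 0 < v) :
    u ^ (-p) * v ^ (-p) ≤ (u ^ (-p) + v ^ (-p)) * max u v ^ (-p) := by
  have hu' := rpow_nonneg hu.le (-p)
  have hv' := rpow_nonneg hv.le (-p)
  rcases le_total u v with h | h
  · rw [max_eq_right h]; nlinarith
  · rw [max_eq_left h]; nlinarith

lemma rpow_neg_mul_rpow_neg_le_of_le_mul_max {u v p C M : ℝ} (hu : 0 < u) (hv : 0 < v)
    (hp : 0 ≤ p) (hC : 0 < C) (hM : 0 < M) (hMC : M ≤ C * max u v) :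
    u ^ (-p) * v ^ (-p) ≤ C ^ p * M ^ (-p) * (u ^ (-p) + v ^ (-p)) := by
  have hmax : max u v ^ (-p) ≤ C ^ p * M ^ (-p) := by
    calc max u v ^ (-p) ≤ (M / C) ^ (-p) :=
          rpow_le_rpow_of_nonpos (by positivity) ((div_le_iff₀' hC).2 hMC) (neg_nonpos.2 hp)
      _ = C ^ p * M ^ (-p) := by
          rw [div_rpow hM.le hC.le, rpow_neg hC.le, div_inv_eq_mul, mul_comm]
  calc u ^ (-p) * v ^ (-p) ≤ (u ^ (-p) + v ^ (-p)) * max u v ^ (-p) :=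
        rpow_neg_mul_rpow_neg_le hu hv
    _ ≤ (u ^ (-p) + v ^ (-p)) * (C ^ p * M ^ (-p)) := by gcongr
    _ = C ^ p * M ^ (-p) * (u ^ (-p) + v ^ (-p)) := mul_comm _ _

lemma rpow_le_two_rpow_mul_max_sub {γ s t : ℝ} (hγ : 0 ≤ γ) (hs : 0 ≤ s) (hst : s ≤ t) :
    t ^ γ ≤ 2 ^ γ * max ((t - s) ^ γ) (s ^ γ) := by
  rcases le_total (t - s) s with h | h
  · rw [max_eq_right (rpow_le_rpow (by linarith) h hγ), ← mul_rpow zero_le_two hs]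
    exact rpow_le_rpow (by linarith) (by linarith) hγ
  · rw [max_eq_left (rpow_le_rpow hs h hγ), ← mul_rpow zero_le_two (by linarith)]
    exact rpow_le_rpow (by linarith) (by linarith) hγ

lemma max_rpow_dist_le_mul_max {X : Type*} [PseudoMetricSpace X] {γ s t : ℝ} (hγ : 0 ≤ γ)
    (hs : 0 ≤ s) (hst : s ≤ t) (x y z : X) :
    max (t ^ γ) (dist x y)
      ≤ (2 ^ γ + 2) * max (max ((t - s) ^ γ) (dist x z)) (max (s ^ γ) (dist z y)) := by
  set m := max (max ((t - s) ^ γ) (dist x z)) (max (s ^ γ) (dist z y))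
  have hm : 0 ≤ m := le_max_of_le_left (le_max_of_le_right dist_nonneg)
  have h2γ : 0 ≤ (2 : ℝ) ^ γ := by positivity
  have htime : max ((t - s) ^ γ) (s ^ γ) ≤ m := max_le_max (le_max_left _ _) (le_max_left _ _)
  have hspace : dist x y ≤ 2 * m := by
    linarith [dist_triangle x z y, (le_max_right _ _).trans (le_max_left _ _ : _ ≤ m),
      (le_max_right _ _).trans (le_max_right _ _ : _ ≤ m)]
  refine max_le ?_ ?_
  · nlinarith [rpow_le_two_rpow_mul_max_sub hγ hs hst, mul_le_mul_of_nonneg_left htime h2γ]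
  · nlinarith

lemma intervalIntegrable_sub_rpow {e : ℝ} (he : -1 < e) (t : ℝ) :
    IntervalIntegrable (fun s ↦ (t - s) ^ e) volume 0 t := by
  simpa using (intervalIntegral.intervalIntegrable_rpow' (a := t) (b := 0) he).comp_sub_left t

lemma integral_rpow_sub_add_rpow {e : ℝ} (he : -1 < e) (t : ℝ) :
    ∫ s in (0 : ℝ)..t, ((t - s) ^ e + s ^ e) = 2 * (t ^ (e + 1) / (e + 1)) := by
  have hsymm : ∫ s in (0 : ℝ)..t, (t - s) ^ e = ∫ s in (0 : ℝ)..t, s ^ e := by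
    simp [intervalIntegral.integral_comp_sub_left (fun u : ℝ ↦ u ^ e) t]
  rw [intervalIntegral.integral_add (intervalIntegrable_sub_rpow he t)
    (intervalIntegral.intervalIntegrable_rpow' he), hsymm, integral_rpow (Or.inl he),
    zero_rpow (by linarith : e + 1 ≠ 0)]
  ring

lemma setIntegral_Ioc_le_of_le_rpow_sub_add_rpow {f : ℝ → ℝ} {e t K : ℝ} (he : -1 < e)
    (ht : 0 ≤ t) (hf : ∀ s, 0 ≤ f s) (hle : ∀ s ∈ Ioo 0 t, f s ≤ K * ((t - s) ^ e + s ^ e)) :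
    ∫ s in Ioc 0 t, f s ≤ K * (2 * (t ^ (e + 1) / (e + 1))) := by
  rw [← integral_rpow_sub_add_rpow he t, ← intervalIntegral.integral_const_mul,
    intervalIntegral.integral_of_le ht]
  refine integral_mono_of_nonneg (Eventually.of_forall hf)
    ((((intervalIntegrable_sub_rpow he t).add
      (intervalIntegral.intervalIntegrable_rpow' he)).const_mul K).1) ?_
  filter_upwards [ae_restrict_mem measurableSet_Ioc, ae_restrict_of_ae (Measure.ae_ne volume t)]
    with s hs hst
  exact hle s ⟨hs.1, hs.2.lt_of_ne hst⟩

section Convolution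

variable {E : Type*} [NormedAddCommGroup E] [NormedSpace ℝ E] [FiniteDimensional ℝ E]
  [MeasurableSpace E] [BorelSpace E] (μ : Measure E) [μ.IsAddHaarMeasure]

lemma integrable_max_one_norm_rpow_neg {p : ℝ} (hp : (finrank ℝ E : ℝ) < p) :
    Integrable (fun w : E ↦ max 1 ‖w‖ ^ (-p)) μ := by
  have hp0 : 0 ≤ p := (Nat.cast_nonneg _).trans hp.le
  refine ((integrable_one_add_norm hp).const_mul (2 ^ p)).mono' ?_
    (Eventually.of_forall fun w ↦ ?_)
  · exact ((continuous_const.max continuous_norm).rpow_const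
      fun w ↦ Or.inl (lt_max_of_lt_left one_pos).ne').aestronglyMeasurable
  · have h : (1 + ‖w‖) / 2 ≤ max 1 ‖w‖ := by
      linarith [le_max_left 1 ‖w‖, le_max_right 1 ‖w‖]
    rw [norm_of_nonneg (by positivity)]
    calc max 1 ‖w‖ ^ (-p) ≤ ((1 + ‖w‖) / 2) ^ (-p) :=
          rpow_le_rpow_of_nonpos (by positivity) h (neg_nonpos.2 hp0)
      _ = 2 ^ p * (1 + ‖w‖) ^ (-p) := by
          rw [div_rpow (by positivity) zero_le_two, rpow_neg zero_le_two]
          field_simp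

lemma integrable_max_dist_rpow_neg {p a : ℝ} (hp : (finrank ℝ E : ℝ) < p) (ha : 0 < a)
    (y : E) : Integrable (fun z ↦ max a (dist z y) ^ (-p)) μ := by
  have h := ((integrable_max_one_norm_rpow_neg μ hp).comp_smul (inv_ne_zero ha.ne')).const_mul
    (a ^ (-p))
  simp only [norm_smul, norm_inv, norm_of_nonneg ha.le, ← max_rpow_eq_rpow_mul_max_one ha] at h
  simpa only [dist_eq_norm] using h.comp_sub_right y

lemma integral_max_dist_rpow_neg {a : ℝ} (ha : 0 < a) (p : ℝ) (y : E) :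
    ∫ z, max a (dist z y) ^ (-p) ∂μ
      = a ^ ((finrank ℝ E : ℝ) - p) * ∫ w, max 1 ‖w‖ ^ (-p) ∂μ := by
  have hscale : ∀ z : E, max a ‖z‖ ^ (-p) = a ^ (-p) * max 1 ‖a⁻¹ • z‖ ^ (-p) := fun z ↦ by
    rw [norm_smul, norm_inv, norm_of_nonneg ha.le, max_rpow_eq_rpow_mul_max_one ha]
  simp_rw [dist_eq_norm]
  rw [integral_sub_right_eq_self (fun z ↦ max a ‖z‖ ^ (-p)) y]
  simp_rw [hscale]
  rw [integral_const_mul, Measure.integral_comp_inv_smul_of_nonneg μ (fun w ↦ max 1 ‖w‖ ^ (-p)) ha.le,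
    smul_eq_mul, ← mul_assoc, ← rpow_natCast, ← rpow_add ha, add_comm, ← sub_eq_add_neg]

lemma integral_max_dist_mul_max_dist_le {p a b C M : ℝ} (hp : (finrank ℝ E : ℝ) < p)
    (ha : 0 < a) (hb : 0 < b) (hC : 0 < C) (hM : 0 < M) {x y : E}
    (hMC : ∀ z, M ≤ C * max (max a (dist x z)) (max b (dist z y))) :
    ∫ z, max a (dist x z) ^ (-p) * max b (dist z y) ^ (-p) ∂μ
      ≤ C ^ p * M ^ (-p) * ((a ^ ((finrank ℝ E : ℝ) - p) + b ^ ((finrank ℝ E : ℝ) - p))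
          * ∫ w, max 1 ‖w‖ ^ (-p) ∂μ) := by
  have hp0 : 0 ≤ p := (Nat.cast_nonneg _).trans hp.le
  simp_rw [dist_comm x] at hMC ⊢
  have hxa := integrable_max_dist_rpow_neg μ hp ha x
  have hyb := integrable_max_dist_rpow_neg μ hp hb y
  calc ∫ z, max a (dist z x) ^ (-p) * max b (dist z y) ^ (-p) ∂μ
      ≤ ∫ z, C ^ p * M ^ (-p) * (max a (dist z x) ^ (-p) + max b (dist z y) ^ (-p)) ∂μ :=
        integral_mono_of_nonneg (Eventually.of_forall fun z ↦ by positivity)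
          ((hxa.add hyb).const_mul _) (Eventually.of_forall fun z ↦
            rpow_neg_mul_rpow_neg_le_of_le_mul_max (lt_max_of_lt_left ha) (lt_max_of_lt_left hb)
              hp0 hC hM (hMC z))
    _ = _ := by
        rw [integral_const_mul, integral_add hxa hyb, integral_max_dist_rpow_neg μ ha,
          integral_max_dist_rpow_neg μ hb, add_mul]

lemma integral_max_rpow_dist_mul_max_rpow_dist_le {p γ s t : ℝ} (hp : (finrank ℝ E : ℝ) < p)
    (hγ : 0 ≤ γ) (hs : 0 < s) (hst : s < t) (x y : E) :
    ∫ z, max ((t - s) ^ γ) (dist x z) ^ (-p) * max (s ^ γ) (dist z y) ^ (-p) ∂μ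
      ≤ (2 ^ γ + 2) ^ p * max (t ^ γ) (dist x y) ^ (-p) * (∫ w, max 1 ‖w‖ ^ (-p) ∂μ)
          * ((t - s) ^ (γ * ((finrank ℝ E : ℝ) - p)) + s ^ (γ * ((finrank ℝ E : ℝ) - p))) := by
  have hts : 0 < t - s := sub_pos.2 hst
  have h := integral_max_dist_mul_max_dist_le μ hp (rpow_pos_of_pos hts γ) (rpow_pos_of_pos hs γ)
    (by positivity) (lt_max_of_lt_left (rpow_pos_of_pos (hs.trans hst) γ))
    (max_rpow_dist_le_mul_max hγ hs.le hst.le x y)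
  rwa [← rpow_mul hts.le, ← rpow_mul hs.le, mul_comm _ (integral _ _), ← mul_assoc] at h

end Convolution

theorem f0_convolution_bound_general (d : ℕ) (α β : ℝ)
    (hβ : 0 < β) (hβα : β < α) :
    ∃ c > (0:ℝ), ∀ t ∈ Set.Ioc (0:ℝ) 1, ∀ x y : EuclideanSpace ℝ (Fin d),
      (∫ s in Set.Ioc (0:ℝ) t, ∫ z : EuclideanSpace ℝ (Fin d),
          (max ((t - s) ^ (1/α)) (dist x z)) ^ (-((d : ℝ) + β)) *
          (max (s ^ (1/α)) (dist z y)) ^ (-((d : ℝ) + β)))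
        ≤ c * (max (t ^ (1/α)) (dist x y)) ^ (-((d : ℝ) + β)) := by
  have hα : 0 < α := hβ.trans hβα
  have hdim : (finrank ℝ (EuclideanSpace ℝ (Fin d)) : ℝ) = d := by simp
  set p : ℝ := d + β
  set e : ℝ := 1 / α * (d - p)
  have he : -1 < e := by
    have : e = -(β / α) := by simp only [e, p]; ring
    linarith [(div_lt_one hα).2 hβα]
  have he1 : 0 < e + 1 := by linarith
  set I := ∫ w : EuclideanSpace ℝ (Fin d), max 1 ‖w‖ ^ (-p)
  have hI : 0 ≤ I := integral_nonneg fun w ↦ by positivity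
  set K := (2 ^ (1 / α) + 2) ^ p * I * (2 / (e + 1))
  have hK : 0 ≤ K := by positivity
  refine ⟨K + 1, by positivity, fun t ⟨ht0, ht1⟩ x y ↦ ?_⟩
  calc _ ≤ (2 ^ (1 / α) + 2) ^ p * max (t ^ (1 / α)) (dist x y) ^ (-p) * I
          * (2 * (t ^ (e + 1) / (e + 1))) :=
        setIntegral_Ioc_le_of_le_rpow_sub_add_rpow he ht0.le
          (fun s ↦ integral_nonneg fun z ↦ by positivity) fun s ⟨hs0, hst⟩ ↦ by
            simpa only [hdim] using integral_max_rpow_dist_mul_max_rpow_dist_le volume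
              (by rw [hdim]; linarith) (by positivity) hs0 hst x y
    _ = K * t ^ (e + 1) * max (t ^ (1 / α)) (dist x y) ^ (-p) := by ring
    _ ≤ (K + 1) * max (t ^ (1 / α)) (dist x y) ^ (-p) := by
        gcongr
        nlinarith [mul_le_mul_of_nonneg_left (rpow_le_one ht0.le ht1 he1.le) hK]

/-- The convolution inequality (3.13): there is `c = c(d,α,β) > 0` such that for
every `t ∈ (0,1]` and `x, y ∈ ℝ^d`,
`∫₀^t ∫ f₀(t-s,x,z) f₀(s,z,y) dz ds ≤ c f₀(t,x,y)`. -/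
theorem f0_convolution_bound (d : ℕ) (hd : 1 ≤ d) (α β : ℝ)
    (hβ : 0 < β) (hβα : β < α) (hα : α < 2) :
    ∃ c > (0:ℝ), ∀ t ∈ Set.Ioc (0:ℝ) 1, ∀ x y : EuclideanSpace ℝ (Fin d),
      (∫ s in Set.Ioc (0:ℝ) t, ∫ z : EuclideanSpace ℝ (Fin d),
          (max ((t - s) ^ (1/α)) (dist x z)) ^ (-((d : ℝ) + β)) *
          (max (s ^ (1/α)) (dist z y)) ^ (-((d : ℝ) + β)))
        ≤ c * (max (t ^ (1/α)) (dist x y)) ^ (-((d : ℝ) + β)) :=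
  f0_convolution_bound_general d α β hβ hβα
end
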